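/- Let AI be the chain complex of F2[U]-modules freely generated over F2[U] by y, b, c, Qy, Qb, Qc, with differential D(y) = Q(y + c), D(b) = y + c, D(c) = Q(y + c), D(Qb) = Qy + Qc, D(Qy) = D(Qc) = 0, and gradings gr(y) = -1, gr(b) = 0, gr(c) = -1, gr(Qy) = -2, gr(Qb) = -1, gr(Qc) = -2 (U lowers gr by 2, D lowers gr by 1). (This is the involutive mapping cone AI_0^- for the right-handed trefoil 3_1, with y = Ua.) Then H(AI) is a free F2[U]-module of rank two generated by [c + Qb] in grading -1 and [Qc] in grading -2, and the induced Q-action sends [c + Qb] to [Qc]. Consequently the involutive concordance invariants are V̲_0(3_1) = -(1/2)((-1) - 1) = 1 and V̄_0(3_1) = -(1/2)(-2) = 1. -/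

import Mathlib

/- STATEMENT 4: the involutive mapping cone AI_0^- of the right-handed
trefoil 3_1 (generators y = Ua, b, c, Qy, Qb, Qc with
D(y) = Q(y+c), D(b) = y+c, D(c) = Q(y+c), D(Qb) = Qy+Qc, D(Qy) = D(Qc) = 0,
gradings gr(y) = -1, gr(b) = 0, gr(c) = -1, gr(Qy) = -2, gr(Qb) = -1,
gr(Qc) = -2) has homology a free F2[U]-module of rank two generated by
[c + Qb] (grading -1) and [Qc] (grading -2), the induced Q-action sending
[c+Qb] to [Qc]; consequently V̲_0(3_1) = 1 and V̄_0(3_1) = 1. -/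

open Polynomial

noncomputable section

/-- F2[U] -/
abbrev R2 : Type := Polynomial (ZMod 2)

/-- the variable U -/
def UU : R2 := Polynomial.X

/-- the i-th free generator -/
def gen {n : ℕ} (i : Fin n) : Fin n → R2 := Pi.single i 1

/-- the F2[U]-linear map sending the i-th generator to `v i` -/
def mkD {n : ℕ} (v : Fin n → (Fin n → R2)) : (Fin n → R2) →ₗ[R2] (Fin n → R2) :=
  (Pi.basisFun R2 (Fin n)).constr ℕ v

/-- `x` is homogeneous of degree `r`, where the i-th generator has
degree `M i` and multiplication by U lowers degree by 2. -/
def Homog {n : ℕ} (M : Fin n → ℤ) (r : ℤ) (x : Fin n → R2) : Prop :=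
  ∀ i : Fin n, ∀ k : ℕ, (x i).coeff k ≠ 0 → M i - 2 * (k : ℤ) = r

/- generators: y = 0, b = 1, c = 2, Qy = 3, Qb = 4, Qc = 5 -/

/-- the differential D of AI_0^-(3_1) -/
def D : (Fin 6 → R2) →ₗ[R2] (Fin 6 → R2) :=
  mkD ![gen 3 + gen 5, gen 0 + gen 2, gen 3 + gen 5, 0, gen 3 + gen 5, 0]

/-- the action of Q: Q·(ξ + Qη) = Qξ -/
def Qm : (Fin 6 → R2) →ₗ[R2] (Fin 6 → R2) :=
  mkD ![gen 3, gen 4, gen 5, 0, 0, 0]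

/-- gradings gr(y) = -1, gr(b) = 0, gr(c) = -1, gr(Qy) = -2, gr(Qb) = -1,
gr(Qc) = -2 -/
def gr : Fin 6 → ℤ := ![-1, 0, -1, -2, -1, -2]

/- ---------- auxiliary lemmas ---------- -/

lemma mkD_apply {n : ℕ} (v : Fin n → (Fin n → R2)) (z : Fin n → R2) :
    mkD v z = ∑ i, z i • v i := by
  simp [mkD, Module.Basis.constr_apply_fintype, Pi.basisFun_equivFun]

@[simp] lemma vec6_0 {α : Type*} (a b c d e f : α) : ![a,b,c,d,e,f] 0 = a := rfl
@[simp] lemma vec6_1 {α : Type*} (a b c d e f : α) : ![a,b,c,d,e,f] 1 = b := rfl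
@[simp] lemma vec6_2 {α : Type*} (a b c d e f : α) : ![a,b,c,d,e,f] 2 = c := rfl
@[simp] lemma vec6_3 {α : Type*} (a b c d e f : α) : ![a,b,c,d,e,f] 3 = d := rfl
@[simp] lemma vec6_4 {α : Type*} (a b c d e f : α) : ![a,b,c,d,e,f] 4 = e := rfl
@[simp] lemma vec6_5 {α : Type*} (a b c d e f : α) : ![a,b,c,d,e,f] 5 = f := rfl

@[simp] lemma gen_apply {n : ℕ} (i j : Fin n) : gen i j = if j = i then 1 else 0 := by
  simp [gen, Pi.single_apply]

lemma D_eq (z : Fin 6 → R2) :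
    D z = ![z 1, 0, z 1, z 0 + z 2 + z 4, 0, z 0 + z 2 + z 4] := by
  funext j
  rw [D, mkD_apply, Fin.sum_univ_six]
  fin_cases j <;> simp (config := { decide := true }) [gen, Pi.single_apply]

lemma Qm_eq (z : Fin 6 → R2) :
    Qm z = ![0, 0, 0, z 0, z 1, z 2] := by
  funext j
  rw [Qm, mkD_apply, Fin.sum_univ_six]
  fin_cases j <;> simp (config := { decide := true }) [gen, Pi.single_apply]

lemma addself (a : R2) : a + a = 0 := CharTwo.add_self_eq_zero a

lemma mem_range_D (z : Fin 6 → R2) :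
    z ∈ LinearMap.range D ↔ z 1 = 0 ∧ z 4 = 0 ∧ z 0 = z 2 ∧ z 3 = z 5 := by
  constructor
  · rintro ⟨w, rfl⟩
    rw [D_eq]
    exact ⟨rfl, rfl, rfl, rfl⟩
  · rintro ⟨h1, h4, h02, h35⟩
    refine ⟨![z 3, z 0, 0, 0, 0, 0], ?_⟩
    rw [D_eq]
    funext j
    fin_cases j <;> simp [h1, h4, h02, h35]

lemma cycle_iff (z : Fin 6 → R2) :
    D z = 0 ↔ z 1 = 0 ∧ z 0 + z 2 + z 4 = 0 := by
  rw [D_eq]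
  constructor
  · intro h
    exact ⟨by simpa using congrFun h 0, by simpa using congrFun h 3⟩
  · rintro ⟨h1, h2⟩
    funext j
    fin_cases j <;> simp [h1, h2]

lemma Upow_ne (n : ℕ) : UU ^ n ≠ 0 := pow_ne_zero n Polynomial.X_ne_zero

lemma exists_coeff {p : R2} (hp : p ≠ 0) : ∃ k, p.coeff k ≠ 0 := by
  by_contra h
  push_neg at h
  exact hp (Polynomial.ext fun k => by rw [h k, Polynomial.coeff_zero])

lemma stmt4_1 : D ∘ₗ D = 0 := by
  apply LinearMap.ext
  intro z
  rw [LinearMap.comp_apply, D_eq z, D_eq]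
  funext j
  fin_cases j <;> simp <;> linear_combination addself (z 1)

lemma stmt4_2 : D (gen 2 + gen 4) = 0 := by
  rw [cycle_iff]
  constructor <;> simp (config := { decide := true }) <;> exact addself 1

lemma stmt4_3 : Homog gr (-1) (gen 2 + gen 4) := by
  intro i k h
  fin_cases i <;>
    simp (config := { decide := true }) [Polynomial.coeff_one] at h <;>
    · subst h; rfl

lemma stmt4_4 : D (gen 5) = 0 := by
  rw [cycle_iff]
  constructor <;> simp (config := { decide := true })

lemma stmt4_5 : Homog gr (-2) (gen 5) := by
  intro i k h
  fin_cases i <;>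
    simp (config := { decide := true }) [Polynomial.coeff_one] at h <;>
    · subst h; rfl

lemma stmt4_6 : ∀ z : Fin 6 → R2, D z = 0 →
    ∃! pq : R2 × R2,
      z + pq.1 • (gen 2 + gen 4) + pq.2 • gen 5 ∈ LinearMap.range D := by
  intro z hz
  rw [cycle_iff] at hz
  obtain ⟨h1, h024⟩ := hz
  refine ⟨(z 0 + z 2, z 3 + z 5), ?_, ?_⟩
  · show z + _ • (gen 2 + gen 4) + _ • gen 5 ∈ LinearMap.range D
    rw [mem_range_D]
    refine ⟨?_, ?_, ?_, ?_⟩ <;> simp (config := { decide := true }) [h1]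
    · linear_combination h024
    · linear_combination -addself (z 2)
    · linear_combination -addself (z 5)
  · rintro ⟨p, q⟩ hpq
    rw [mem_range_D] at hpq
    obtain ⟨-, -, e02, e35⟩ := hpq
    simp (config := { decide := true }) at e02 e35
    refine Prod.ext ?_ ?_ <;> simp
    · linear_combination -e02 - addself (z 2)
    · linear_combination -e35 - addself (z 5)

lemma stmt4_7 : Qm (gen 2 + gen 4) + gen 5 ∈ LinearMap.range D := by
  rw [mem_range_D, Qm_eq]
  refine ⟨?_, ?_, ?_, ?_⟩ <;> simp (config := { decide := true })
  linear_combination -addself (1 : R2)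

lemma stmt4_8 :
    IsGreatest {r : ℤ | ∃ z : Fin 6 → R2, D z = 0 ∧ Homog gr r z ∧
      ∀ n : ℕ, UU ^ n • z ∉ LinearMap.range D ∧
        ¬ ∃ w : Fin 6 → R2, D w = 0 ∧ UU ^ n • z + Qm w ∈ LinearMap.range D}
      (-1) := by
  constructor
  · refine ⟨gen 2 + gen 4, stmt4_2, stmt4_3, fun n => ⟨?_, ?_⟩⟩
    · intro hmem
      rw [mem_range_D] at hmem
      obtain ⟨-, -, h02, -⟩ := hmem
      simp (config := { decide := true }) at h02
      exact Upow_ne n h02.symm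
    · rintro ⟨w, hw, hmem⟩
      rw [mem_range_D] at hmem
      obtain ⟨-, -, h02, -⟩ := hmem
      simp (config := { decide := true }) [Qm_eq] at h02
      exact Upow_ne n h02.symm
  · rintro r ⟨z, hz, hhom, hcond⟩
    rw [cycle_iff] at hz
    obtain ⟨h1, h024⟩ := hz
    have key : z 0 + z 2 ≠ 0 := by
      intro h02
      obtain ⟨-, hb⟩ := hcond 0
      apply hb
      refine ⟨![z 3 + z 5, 0, 0, 0, z 3 + z 5, 0], ?_, ?_⟩
      · rw [cycle_iff]
        refine ⟨by simp, ?_⟩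
        simp
        linear_combination addself (z 3) + addself (z 5)
      · rw [pow_zero, one_smul, mem_range_D]
        refine ⟨?_, ?_, ?_, ?_⟩ <;> simp [Qm_eq, h1]
        · linear_combination h024 - h02
        · linear_combination h02 - addself (z 2)
        · linear_combination addself (z 3)
    obtain ⟨k, hk⟩ := exists_coeff key
    have hcase : (z 0).coeff k ≠ 0 ∨ (z 2).coeff k ≠ 0 := by
      by_contra hc
      push_neg at hc
      rw [Polynomial.coeff_add, hc.1, hc.2, add_zero] at hk
      exact hk rfl
    rcases hcase with h | h
    · have := hhom 0 k h
      simp [gr] at this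
      omega
    · have := hhom 2 k h
      simp [gr] at this
      omega

lemma stmt4_10 :
    IsGreatest {r : ℤ | ∃ z : Fin 6 → R2, D z = 0 ∧ Homog gr r z ∧
      (∀ n : ℕ, UU ^ n • z ∉ LinearMap.range D) ∧
      ∃ m : ℕ, ∃ w : Fin 6 → R2, D w = 0 ∧
        UU ^ m • z + Qm w ∈ LinearMap.range D} (-2) := by
  constructor
  · refine ⟨gen 5, stmt4_4, stmt4_5, fun n hmem => ?_, ?_⟩
    · rw [mem_range_D] at hmem
      obtain ⟨-, -, -, h35⟩ := hmem
      simp (config := { decide := true }) at h35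
      exact Upow_ne n h35.symm
    · refine ⟨0, ![1, 0, 0, 0, 1, 0], ?_, ?_⟩
      · rw [cycle_iff]
        refine ⟨by simp, ?_⟩
        simp
        linear_combination addself (1 : R2)
      · rw [pow_zero, one_smul, mem_range_D]
        refine ⟨?_, ?_, ?_, ?_⟩ <;> simp (config := { decide := true }) [Qm_eq]
  · rintro r ⟨z, hz, hhom, hn, m, w, hw, hmem⟩
    rw [cycle_iff] at hz hw
    obtain ⟨h1, h024⟩ := hz
    rw [mem_range_D] at hmem
    obtain ⟨-, h4, -, -⟩ := hmem
    simp [Qm_eq, hw.1] at h4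
    have hz4 : z 4 = 0 := by
      rcases h4 with ⟨h, -⟩ | h
      · exact absurd h Polynomial.X_ne_zero
      · exact h
    have h02 : z 0 = z 2 := by linear_combination h024 - hz4 - addself (z 2)
    have key : z 3 + z 5 ≠ 0 := by
      intro h35
      apply hn 0
      rw [pow_zero, one_smul, mem_range_D]
      exact ⟨h1, hz4, h02, by linear_combination h35 - addself (z 5)⟩
    obtain ⟨k, hk⟩ := exists_coeff key
    have hcase : (z 3).coeff k ≠ 0 ∨ (z 5).coeff k ≠ 0 := by
      by_contra hc
      push_neg at hc
      rw [Polynomial.coeff_add, hc.1, hc.2, add_zero] at hk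
      exact hk rfl
    rcases hcase with h | h
    · have := hhom 3 k h
      simp [gr] at this
      omega
    · have := hhom 5 k h
      simp [gr] at this
      omega


theorem stmt_4 :
    -- AI is a chain complex
    D ∘ₗ D = 0 ∧
    -- c + Qb is a cycle, homogeneous of grading -1
    D (gen 2 + gen 4) = 0 ∧ Homog gr (-1) (gen 2 + gen 4) ∧
    -- Qc is a cycle, homogeneous of grading -2
    D (gen 5) = 0 ∧ Homog gr (-2) (gen 5) ∧
    -- H(AI) is free of rank two on [c + Qb], [Qc]
    (∀ z : Fin 6 → R2, D z = 0 →
      ∃! pq : R2 × R2,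
        z + pq.1 • (gen 2 + gen 4) + pq.2 • gen 5 ∈ LinearMap.range D) ∧
    -- the induced Q-action sends [c + Qb] to [Qc]
    Qm (gen 2 + gen 4) + gen 5 ∈ LinearMap.range D ∧
    -- V̲_0: max{ r : ∃ x ∈ H_r, U^n x ≠ 0 and U^n x ∉ Im Q for all n } = -1
    IsGreatest {r : ℤ | ∃ z : Fin 6 → R2, D z = 0 ∧ Homog gr r z ∧
      ∀ n : ℕ, UU ^ n • z ∉ LinearMap.range D ∧
        ¬ ∃ w : Fin 6 → R2, D w = 0 ∧ UU ^ n • z + Qm w ∈ LinearMap.range D}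
      (-1) ∧
    (-(1 : ℚ) / 2) * ((-1) - 1) = 1 ∧
    -- V̄_0: max{ r : ∃ x ∈ H_r, U^n x ≠ 0 for all n, and U^m x ∈ Im Q for some m } = -2
    IsGreatest {r : ℤ | ∃ z : Fin 6 → R2, D z = 0 ∧ Homog gr r z ∧
      (∀ n : ℕ, UU ^ n • z ∉ LinearMap.range D) ∧
      ∃ m : ℕ, ∃ w : Fin 6 → R2, D w = 0 ∧
        UU ^ m • z + Qm w ∈ LinearMap.range D} (-2) ∧
    (-(1 : ℚ) / 2) * (-2) = 1 :=
  ⟨stmt4_1, stmt4_2, stmt4_3, stmt4_4, stmt4_5, stmt4_6, stmt4_7, stmt4_8,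
    by norm_num, stmt4_10, by norm_num⟩
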